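/- arXiv:1601.05189 — 3 statements merged into one kernel-verified Lean document; each statement's English description precedes it below -/
import Mathlib

section
/- Assume β − γ is not constant on the closure of Ω and that for every d > 0 the quantity λ_p(d) is the principal eigenvalue of M_d, i.e. there is a positive continuous eigenfunction φ_d on the closure of Ω with M_d[φ_d](x) = −λ_p(d) φ_d(x) for all x ∈ Ω. Then λ_p is strictly monotone increasing in d: for all 0 < d₁ < d₂ one has λ_p(d₁) < λ_p(d₂). -/
/-!
Test the Rayleigh quotient at `d₁` with the principal eigenfunction `φ` of `d₂`. Multiplying the
eigenvalue equation by `φ` and symmetrizing the double integral (`J` is even) shows that the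
quotient at `d₂` is exactly `λ_p(d₂)`; the quotient is affine in `d` with slope
`D(φ) / (2 ∫ φ²)`, where `D(φ) = ∫∫ J(x - y) (φ y - φ x)²`. So `λ_p(d₁) < λ_p(d₂)` as soon as
`D(φ) > 0`. If `D(φ) = 0`, then `φ y = φ x` whenever `J(x - y) > 0`, in particular for `x, y`
close, so `φ` is constant on the connected set `Ω`; the eigenvalue equation then reads
`β - γ = -λ_p(d₂)` on `Ω`, hence on its closure, which is excluded.
-/

open MeasureTheory Set Filter Topology

noncomputable section

abbrev Euc (n : ℕ) := EuclideanSpace ℝ (Fin n)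

/-- Ω is a bounded domain. -/
def DomainHyp {n : ℕ} (Ω : Set (Euc n)) : Prop :=
  IsOpen Ω ∧ IsConnected Ω ∧ Bornology.IsBounded Ω

/-- Hypotheses (J) on the dispersal kernel. -/
def KernelHyp {n : ℕ} (J : Euc n → ℝ) (Ω : Set (Euc n)) : Prop :=
  Continuous J ∧ 0 < J 0 ∧ (∀ x, J (-x) = J x) ∧ (∀ x, 0 ≤ J x) ∧
    (∫ x, J x) = 1 ∧ ¬ (∀ x ∈ Ω, (∫ y in Ω, J (x - y)) = 1)

/-- positive continuous rate function on the closure of Ω. -/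
def RateHyp {n : ℕ} (Ω : Set (Euc n)) (f : Euc n → ℝ) : Prop :=
  ContinuousOn f (closure Ω) ∧ ∀ x ∈ closure Ω, 0 < f x

/-- The set of Rayleigh quotients over nonzero φ ∈ L²(Ω). -/
def rayleighSet {n : ℕ} (J : Euc n → ℝ) (Ω : Set (Euc n)) (β γ : Euc n → ℝ) (d : ℝ) :
    Set ℝ :=
  { r | ∃ φ : Euc n → ℝ, MemLp φ 2 (volume.restrict Ω) ∧
      ¬ (∀ᵐ x ∂(volume.restrict Ω), φ x = 0) ∧
      r = (d / 2 * (∫ x in Ω, ∫ y in Ω, J (x - y) * (φ y - φ x) ^ 2)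
            + ∫ x in Ω, (γ x - β x) * φ x ^ 2) / (∫ x in Ω, φ x ^ 2) }

/-- λ_p(d). -/
def lambdaP {n : ℕ} (J : Euc n → ℝ) (Ω : Set (Euc n)) (β γ : Euc n → ℝ) (d : ℝ) : ℝ :=
  sInf (rayleighSet J Ω β γ d)

/-- `lam` is a principal eigenvalue of `M_d`. -/
def IsPrincipalEigen {n : ℕ} (J : Euc n → ℝ) (Ω : Set (Euc n)) (β γ : Euc n → ℝ)
    (d lam : ℝ) : Prop :=
  ∃ φ : Euc n → ℝ, ContinuousOn φ (closure Ω) ∧ (∀ x ∈ closure Ω, 0 < φ x) ∧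
    ∀ x ∈ Ω, d * (∫ y in Ω, J (x - y) * (φ y - φ x)) + (β x - γ x) * φ x = -lam * φ x

theorem IsPreconnected.apply_eq_of_dist_lt {X Y : Type*} [PseudoMetricSpace X] {s : Set X}
    (hs : IsPreconnected s) {f : X → Y} {r : ℝ} (hr : 0 < r)
    (hf : ∀ x ∈ s, ∀ y ∈ s, dist x y < r → f x = f y) {x y : X} (hx : x ∈ s) (hy : y ∈ s) :
    f x = f y := by
  have := isPreconnected_iff_preconnectedSpace.mp hs
  have hloc : IsLocallyConstant (s.domRestrict f) := by
    refine (IsLocallyConstant.iff_eventually_eq _).2 fun a => ?_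
    exact Metric.eventually_nhds_iff.2 ⟨r, hr, fun b hb => hf b b.2 a a.2 hb⟩
  exact hloc.apply_eq_of_preconnectedSpace ⟨x, hx⟩ ⟨y, hy⟩

theorem IsPreconnected.apply_eq_of_integral_kernel_mul_sq_sub_eq_zero {X : Type*}
    [PseudoMetricSpace X] [MeasurableSpace X] {μ : Measure X} [SFinite μ] [μ.IsOpenPosMeasure]
    {s : Set X} (hs : IsPreconnected s) (hso : IsOpen s) {k : X → X → ℝ} {φ : X → ℝ} {r : ℝ}
    (hr : 0 < r) (hkpos : ∀ x y, dist x y < r → 0 < k x y) (hk : ∀ x y, 0 ≤ k x y)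
    (hcont : ContinuousOn (fun z : X × X => k z.1 z.2 * (φ z.2 - φ z.1) ^ 2) (s ×ˢ s))
    (hint : Integrable (fun z : X × X => k z.1 z.2 * (φ z.2 - φ z.1) ^ 2)
      ((μ.restrict s).prod (μ.restrict s)))
    (h0 : ∫ x in s, ∫ y in s, k x y * (φ y - φ x) ^ 2 ∂μ ∂μ = 0) {x y : X} (hx : x ∈ s)
    (hy : y ∈ s) : φ x = φ y := by
  rw [← integral_prod _ hint, integral_eq_zero_iff_of_nonneg
    (fun z => mul_nonneg (hk _ _) (sq_nonneg _)) hint, Measure.prod_restrict] at h0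
  have hzero := Measure.eqOn_open_of_ae_eq h0 (hso.prod hso) hcont continuousOn_const
  refine hs.apply_eq_of_dist_lt hr (fun a ha b hb hab => ?_) hx hy
  have hab' : k a b * (φ b - φ a) ^ 2 = 0 := hzero (mk_mem_prod ha hb)
  rw [mul_eq_zero, or_iff_right (hkpos a b hab).ne', sq_eq_zero_iff, sub_eq_zero] at hab'
  exact hab'.symm

theorem ContinuousOn.integrable_restrict_of_isCompact_closure {X : Type*} [TopologicalSpace X]
    [T2Space X] [MeasurableSpace X] [OpensMeasurableSpace X] {μ : Measure X}
    [IsFiniteMeasureOnCompacts μ] {s : Set X} {f : X → ℝ} (hs : IsCompact (closure s))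
    (hf : ContinuousOn f (closure s)) : Integrable f (μ.restrict s) :=
  (hf.integrableOn_compact hs).mono_set subset_closure

theorem integral_sq_pos_of_not_ae_eq_zero {α : Type*} [MeasurableSpace α] {μ : Measure α}
    {φ : α → ℝ} (hint : Integrable (fun x => φ x ^ 2) μ) (hne : ¬ ∀ᵐ x ∂μ, φ x = 0) :
    0 < ∫ x, φ x ^ 2 ∂μ := by
  refine (integral_nonneg fun x => sq_nonneg (φ x)).lt_of_ne fun h0 => hne ?_
  filter_upwards [(integral_eq_zero_iff_of_nonneg (fun x => sq_nonneg (φ x)) hint).1 h0.symm]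
    with x hx using pow_eq_zero_iff two_ne_zero |>.1 hx

section SymmetricKernel

variable {α : Type*} [MeasurableSpace α] {μ : Measure α} [SFinite μ] {k : α → α → ℝ}
  {φ : α → ℝ}

theorem integral_integral_kernel_mul_sq_sub (hk : ∀ x y, k x y = k y x)
    (hint : Integrable (fun z : α × α => k z.1 z.2 * (φ z.2 - φ z.1) * φ z.1) (μ.prod μ)) :
    ∫ x, ∫ y, k x y * (φ y - φ x) ^ 2 ∂μ ∂μ =
      -2 * ∫ x, φ x * ∫ y, k x y * (φ y - φ x) ∂μ ∂μ := by
  set H : α × α → ℝ := fun z => k z.1 z.2 * (φ z.2 - φ z.1) * φ z.1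
  have hsplit : (fun z : α × α => k z.1 z.2 * (φ z.2 - φ z.1) ^ 2) =
      fun z => -H z.swap - H z := by
    funext z
    simp only [H, Prod.fst_swap, Prod.snd_swap, hk z.2 z.1]
    ring
  have hswap : Integrable (fun z : α × α => -H z.swap) (μ.prod μ) := hint.swap.neg
  have hφ : (fun x => φ x * ∫ y, k x y * (φ y - φ x) ∂μ) = fun x => ∫ y, H (x, y) ∂μ := by
    funext x
    rw [← integral_const_mul]
    congr 1 with y
    ring
  calc ∫ x, ∫ y, k x y * (φ y - φ x) ^ 2 ∂μ ∂μ
      = ∫ z, k z.1 z.2 * (φ z.2 - φ z.1) ^ 2 ∂μ.prod μ :=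
        (integral_prod (fun z : α × α => k z.1 z.2 * (φ z.2 - φ z.1) ^ 2)
          (hsplit ▸ hswap.sub hint)).symm
    _ = -2 * ∫ z, H z ∂μ.prod μ := by
        rw [hsplit, integral_sub hswap hint, integral_neg, integral_prod_swap]
        ring
    _ = -2 * ∫ x, φ x * ∫ y, k x y * (φ y - φ x) ∂μ ∂μ := by rw [hφ, integral_prod H hint]

theorem energy_identity_of_eigen {β γ : α → ℝ} {d lam : ℝ} (hk : ∀ x y, k x y = k y x)
    (hint : Integrable (fun z : α × α => k z.1 z.2 * (φ z.2 - φ z.1) * φ z.1) (μ.prod μ))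
    (hV : Integrable (fun x => (β x - γ x) * φ x ^ 2) μ)
    (heq : ∀ᵐ x ∂μ, d * (∫ y, k x y * (φ y - φ x) ∂μ) + (β x - γ x) * φ x = -lam * φ x) :
    d / 2 * ∫ x, ∫ y, k x y * (φ y - φ x) ^ 2 ∂μ ∂μ + ∫ x, (γ x - β x) * φ x ^ 2 ∂μ =
      lam * ∫ x, φ x ^ 2 ∂μ := by
  have hA : Integrable (fun x => φ x * ∫ y, k x y * (φ y - φ x) ∂μ) μ := by
    refine hint.integral_prod_left.congr (ae_of_all _ fun x => ?_)
    simp only [← integral_const_mul]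
    congr 1 with y
    ring
  have htested : ∫ x, (d * (φ x * ∫ y, k x y * (φ y - φ x) ∂μ) + (β x - γ x) * φ x ^ 2) ∂μ =
      ∫ x, -lam * φ x ^ 2 ∂μ := by
    refine integral_congr_ae (heq.mono fun x hx => ?_)
    linear_combination φ x * hx
  rw [integral_add (hA.const_mul d) hV, integral_const_mul, integral_const_mul] at htested
  have hneg : ∫ x, (γ x - β x) * φ x ^ 2 ∂μ = -∫ x, (β x - γ x) * φ x ^ 2 ∂μ := by
    rw [← integral_neg]
    congr 1 with x
    ring
  rw [integral_integral_kernel_mul_sq_sub hk hint, hneg]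
  linarith

end SymmetricKernel

section Euclidean

variable {n : ℕ}

def rayleighQuotient (J : Euc n → ℝ) (Ω : Set (Euc n)) (β γ : Euc n → ℝ) (d : ℝ)
    (φ : Euc n → ℝ) : ℝ :=
  (d / 2 * (∫ x in Ω, ∫ y in Ω, J (x - y) * (φ y - φ x) ^ 2)
    + ∫ x in Ω, (γ x - β x) * φ x ^ 2) / (∫ x in Ω, φ x ^ 2)

variable {J : Euc n → ℝ} {Ω : Set (Euc n)} {β γ φ : Euc n → ℝ}

theorem integrable_prod_restrict_of_continuousOn {f : Euc n × Euc n → ℝ}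
    (hK : IsCompact (closure Ω)) (hf : ContinuousOn f (closure Ω ×ˢ closure Ω)) :
    Integrable f ((volume.restrict Ω).prod (volume.restrict Ω)) := by
  rw [Measure.prod_restrict, ← Measure.volume_eq_prod]
  exact (hf.integrableOn_compact (hK.prod hK)).mono_set (prod_mono subset_closure subset_closure)

theorem memLp_two_of_continuousOn_closure (hK : IsCompact (closure Ω))
    (hφ : ContinuousOn φ (closure Ω)) : MemLp φ 2 (volume.restrict Ω) :=
  (memLp_two_iff_integrable_sq
    (hφ.integrable_restrict_of_isCompact_closure hK).aestronglyMeasurable).2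
    ((hφ.pow 2).integrable_restrict_of_isCompact_closure hK)

theorem rayleighSet_bddBelow {d : ℝ} (hJ : ∀ x, 0 ≤ J x) (hd : 0 ≤ d)
    (hΩ : MeasurableSet Ω) (hK : IsCompact (closure Ω)) (hβ : ContinuousOn β (closure Ω))
    (hγ : ContinuousOn γ (closure Ω)) : BddBelow (rayleighSet J Ω β γ d) := by
  obtain ⟨C, hC⟩ := hK.exists_bound_of_continuousOn (hγ.sub hβ)
  have hCΩ : ∀ᵐ x ∂volume.restrict Ω, ‖γ x - β x‖ ≤ C :=
    ae_restrict_of_forall_mem hΩ fun x hx => hC x (subset_closure hx)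
  refine ⟨-C, ?_⟩
  rintro _ ⟨ψ, hψ, hψne, rfl⟩
  have hS := integral_sq_pos_of_not_ae_eq_zero hψ.integrable_sq hψne
  have hV : -C * ∫ x in Ω, ψ x ^ 2 ≤ ∫ x in Ω, (γ x - β x) * ψ x ^ 2 := by
    rw [← integral_const_mul]
    refine integral_mono_ae (hψ.integrable_sq.const_mul _) ?_ ?_
    · exact hψ.integrable_sq.bdd_mul
        ((hγ.sub hβ).integrable_restrict_of_isCompact_closure hK).aestronglyMeasurable hCΩ
    · filter_upwards [hCΩ] with x hx
      exact mul_le_mul_of_nonneg_right (neg_le_of_abs_le hx) (sq_nonneg _)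
  have hD : 0 ≤ ∫ x in Ω, ∫ y in Ω, J (x - y) * (ψ y - ψ x) ^ 2 :=
    integral_nonneg fun x => integral_nonneg fun y => mul_nonneg (hJ _) (sq_nonneg _)
  rw [le_div_iff₀ hS]
  nlinarith

theorem rayleighQuotient_lt_of_lt {d₁ d₂ : ℝ} (hd : d₁ < d₂)
    (hD : 0 < ∫ x in Ω, ∫ y in Ω, J (x - y) * (φ y - φ x) ^ 2)
    (hS : 0 < ∫ x in Ω, φ x ^ 2) :
    rayleighQuotient J Ω β γ d₁ φ < rayleighQuotient J Ω β γ d₂ φ := by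
  unfold rayleighQuotient
  gcongr

theorem rayleighQuotient_eq_of_eigen {d lam : ℝ} (hΩ : MeasurableSet Ω)
    (hK : IsCompact (closure Ω)) (hJc : Continuous J) (hJs : ∀ x, J (-x) = J x)
    (hβ : ContinuousOn β (closure Ω)) (hγ : ContinuousOn γ (closure Ω))
    (hφ : ContinuousOn φ (closure Ω)) (hS : 0 < ∫ x in Ω, φ x ^ 2)
    (heq : ∀ x ∈ Ω,
      d * (∫ y in Ω, J (x - y) * (φ y - φ x)) + (β x - γ x) * φ x = -lam * φ x) :
    rayleighQuotient J Ω β γ d φ = lam := by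
  have hφ₁ : ContinuousOn (fun z : Euc n × Euc n => φ z.1) (closure Ω ×ˢ closure Ω) :=
    hφ.comp continuousOn_fst fun z hz => hz.1
  have hφ₂ : ContinuousOn (fun z : Euc n × Euc n => φ z.2) (closure Ω ×ˢ closure Ω) :=
    hφ.comp continuousOn_snd fun z hz => hz.2
  have hJ₂ : Continuous fun z : Euc n × Euc n => J (z.1 - z.2) :=
    hJc.comp (continuous_fst.sub continuous_snd)
  have hid := energy_identity_of_eigen (k := fun x y => J (x - y))
    (fun x y => by rw [← neg_sub, hJs])
    (integrable_prod_restrict_of_continuousOn hK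
      ((hJ₂.continuousOn.mul (hφ₂.sub hφ₁)).mul hφ₁))
    (((hβ.sub hγ).mul (hφ.pow 2)).integrable_restrict_of_isCompact_closure hK)
    (ae_restrict_of_forall_mem hΩ heq)
  rw [rayleighQuotient, hid, mul_div_assoc, div_self hS.ne', mul_one]

theorem apply_eq_of_energy_eq_zero (hΩo : IsOpen Ω) (hΩc : IsPreconnected Ω)
    (hK : IsCompact (closure Ω)) (hJc : Continuous J) (hJ0 : 0 < J 0) (hJ : ∀ x, 0 ≤ J x)
    (hφ : ContinuousOn φ (closure Ω))
    (h0 : ∫ x in Ω, ∫ y in Ω, J (x - y) * (φ y - φ x) ^ 2 = 0) {x y : Euc n} (hx : x ∈ Ω)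
    (hy : y ∈ Ω) : φ x = φ y := by
  obtain ⟨r, hr, hJr⟩ := Metric.eventually_nhds_iff.1
    (continuousAt_const.eventually_lt hJc.continuousAt hJ0)
  have hcont : ContinuousOn (fun z : Euc n × Euc n => J (z.1 - z.2) * (φ z.2 - φ z.1) ^ 2)
      (closure Ω ×ˢ closure Ω) :=
    (hJc.comp (continuous_fst.sub continuous_snd)).continuousOn.mul
      (((hφ.comp continuousOn_snd fun z hz => hz.2).sub
        (hφ.comp continuousOn_fst fun z hz => hz.1)).pow 2)
  refine hΩc.apply_eq_of_integral_kernel_mul_sq_sub_eq_zero hΩo hr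
    (fun a b hab => hJr (by rwa [dist_zero_right, ← dist_eq_norm])) (fun a b => hJ _)
    (hcont.mono (prod_mono subset_closure subset_closure))
    (integrable_prod_restrict_of_continuousOn hK hcont) h0 hx hy

theorem sub_eq_of_eigenfunction_eq_const {d lam c : ℝ} (hβ : ContinuousOn β (closure Ω))
    (hγ : ContinuousOn γ (closure Ω)) (hφ : ∀ x ∈ Ω, 0 < φ x) (hφc : ∀ x ∈ Ω, φ x = c)
    (heq : ∀ x ∈ Ω,
      d * (∫ y in Ω, J (x - y) * (φ y - φ x)) + (β x - γ x) * φ x = -lam * φ x)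
    {x : Euc n} (hx : x ∈ closure Ω) : β x - γ x = -lam := by
  refine EqOn.of_subset_closure (f := fun x => β x - γ x) (g := fun _ => -lam) (fun x hx => ?_)
    (hβ.sub hγ) continuousOn_const subset_closure subset_rfl hx
  have hflat : ∫ y in Ω, J (x - y) * (φ y - φ x) = 0 :=
    setIntegral_eq_zero_of_forall_eq_zero fun y hy => by rw [hφc y hy, hφc x hx, sub_self,
      mul_zero]
  have := heq x hx
  rw [hflat, mul_zero, zero_add] at this
  exact mul_right_cancel₀ (hφ x hx).ne' this

end Euclidean

/-- if β − γ is not constant on Ω̄ and λ_p(d) is the principal eigenvalue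
of M_d for every d > 0, then λ_p is strictly increasing in d. -/
theorem lambdaP_strictMono {n : ℕ} (J : Euc n → ℝ) (Ω : Set (Euc n))
    (β γ : Euc n → ℝ) (hΩ : DomainHyp Ω) (hJ : KernelHyp J Ω)
    (hβ : RateHyp Ω β) (hγ : RateHyp Ω γ)
    (hnc : ¬ ∃ c : ℝ, ∀ x ∈ closure Ω, β x - γ x = c)
    (hpe : ∀ d : ℝ, 0 < d → IsPrincipalEigen J Ω β γ d (lambdaP J Ω β γ d)) :
    ∀ d₁ d₂ : ℝ, 0 < d₁ → d₁ < d₂ → lambdaP J Ω β γ d₁ < lambdaP J Ω β γ d₂ := by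
  intro d₁ d₂ hd₁ hd₁₂
  obtain ⟨hΩo, hΩc, hΩb⟩ := hΩ
  obtain ⟨hJc, hJ0, hJs, hJ, -, -⟩ := hJ
  obtain ⟨φ, hφc, hφpos, hφeq⟩ := hpe d₂ (hd₁.trans hd₁₂)
  have hK : IsCompact (closure Ω) := hΩb.isCompact_closure
  have hφpos' : ∀ x ∈ Ω, 0 < φ x := fun x hx => hφpos x (subset_closure hx)
  have hφL2 := memLp_two_of_continuousOn_closure hK hφc
  have hφne : ¬ ∀ᵐ x ∂volume.restrict Ω, φ x = 0 := fun h => by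
    obtain ⟨x, hx⟩ := hΩc.nonempty
    exact (hφpos' x hx).ne' <|
      Measure.eqOn_open_of_ae_eq h hΩo (hφc.mono subset_closure) continuousOn_const hx
  have hS := integral_sq_pos_of_not_ae_eq_zero hφL2.integrable_sq hφne
  have hD : 0 < ∫ x in Ω, ∫ y in Ω, J (x - y) * (φ y - φ x) ^ 2 := by
    refine (integral_nonneg fun x => integral_nonneg fun y =>
      mul_nonneg (hJ _) (sq_nonneg _)).lt_of_ne' fun h0 => ?_
    obtain ⟨x₀, hx₀⟩ := hΩc.nonempty
    have hφconst : ∀ x ∈ Ω, φ x = φ x₀ := fun x hx =>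
      apply_eq_of_energy_eq_zero hΩo hΩc.isPreconnected hK hJc hJ0 hJ hφc h0 hx hx₀
    exact hnc ⟨_, fun x hx => sub_eq_of_eigenfunction_eq_const hβ.1 hγ.1 hφpos' hφconst hφeq hx⟩
  calc lambdaP J Ω β γ d₁ ≤ rayleighQuotient J Ω β γ d₁ φ :=
        csInf_le (rayleighSet_bddBelow hJ hd₁.le hΩo.measurableSet hK hβ.1 hγ.1)
          ⟨φ, hφL2, hφne, rfl⟩
    _ < rayleighQuotient J Ω β γ d₂ φ := rayleighQuotient_lt_of_lt hd₁₂ hD hS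
    _ = lambdaP J Ω β γ d₂ :=
        rayleighQuotient_eq_of_eigen hΩo.measurableSet hK hJc hJs hβ.1 hγ.1 hφc hS hφeq
end
end

section
/- Assume that for every d > 0 the quantity λ_p(d) is the principal eigenvalue of M_d, i.e. there is a positive continuous eigenfunction φ_d on the closure of Ω with M_d[φ_d](x) = −λ_p(d) φ_d(x) for all x ∈ Ω. Then λ_p(d) → min over x in the closure of Ω of (γ(x) − β(x)) as d → 0⁺. -/
open MeasureTheory Set Filter Topology

noncomputable section

/-!
Since the nonlocal energy is nonnegative, every Rayleigh quotient with `d ≥ 0` is at least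
`m = min_{Ω̄} (γ - β)`. Conversely, for `c > m` take a closed ball `B ⊆ Ω` on which `γ - β < c`
and test with its indicator `φ`: since `(φ y - φ x)² ≤ 1` and `∫ J = 1`, the nonlocal energy of
`φ` is at most `|Ω|`, so `m ≤ λ_p(d) ≤ d |Ω| / (2 |B|) + c`.
-/

lemma integral_sq_pos {α : Type*} [MeasurableSpace α] {μ : Measure α} {φ : α → ℝ}
    (hφ : MemLp φ 2 μ) (hφ0 : ¬ ∀ᵐ x ∂μ, φ x = 0) : 0 < ∫ x, φ x ^ 2 ∂μ := by
  refine (integral_nonneg fun x => sq_nonneg (φ x)).lt_of_ne' fun h => hφ0 ?_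
  filter_upwards [(integral_eq_zero_iff_of_nonneg (fun x => sq_nonneg (φ x))
    hφ.integrable_sq).1 h] with x hx
  exact (pow_eq_zero_iff two_ne_zero).1 hx

lemma mul_integral_sq_le_integral_mul_sq {α : Type*} [MeasurableSpace α] {μ : Measure α}
    {f φ : α → ℝ} {m C : ℝ} (hφ : MemLp φ 2 μ) (hf : AEStronglyMeasurable f μ)
    (hfC : ∀ᵐ x ∂μ, ‖f x‖ ≤ C) (hmf : ∀ᵐ x ∂μ, m ≤ f x) :
    m * ∫ x, φ x ^ 2 ∂μ ≤ ∫ x, f x * φ x ^ 2 ∂μ := by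
  rw [← integral_const_mul]
  refine integral_mono_ae (hφ.integrable_sq.const_mul m) (hφ.integrable_sq.bdd_mul hf hfC) ?_
  filter_upwards [hmf] with x hx using mul_le_mul_of_nonneg_right hx (sq_nonneg _)

lemma setIntegral_setIntegral_kernel_mul_sq_sub_le {G : Type*} [AddGroup G] [MeasurableSpace G]
    [MeasurableAdd G] [MeasurableNeg G] {μ : Measure G} [μ.IsNegInvariant] [μ.IsAddLeftInvariant]
    {J φ : G → ℝ} {s : Set G} (hJ : ∀ x, 0 ≤ J x) (hJ1 : ∫ x, J x ∂μ = 1)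
    (hs : μ s ≠ ⊤) (hφ : ∀ x y, (φ y - φ x) ^ 2 ≤ 1) :
    ∫ x in s, ∫ y in s, J (x - y) * (φ y - φ x) ^ 2 ∂μ ∂μ ≤ μ.real s := by
  have hJint : Integrable J μ := Integrable.of_integral_ne_zero (by rw [hJ1]; exact one_ne_zero)
  have hinner : ∀ x, ∫ y in s, J (x - y) * (φ y - φ x) ^ 2 ∂μ ≤ 1 := fun x =>
    calc ∫ y in s, J (x - y) * (φ y - φ x) ^ 2 ∂μ ≤ ∫ y in s, J (x - y) ∂μ :=
          integral_mono_of_nonneg (ae_of_all _ fun y => mul_nonneg (hJ _) (sq_nonneg _))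
            (hJint.comp_sub_left x).integrableOn
            (ae_of_all _ fun y => mul_le_of_le_one_right (hJ _) (hφ x y))
      _ ≤ ∫ y, J (x - y) ∂μ := setIntegral_le_integral (hJint.comp_sub_left x)
          (ae_of_all _ fun y => hJ _)
      _ = 1 := by rw [integral_sub_left_eq_self J μ x, hJ1]
  calc ∫ x in s, ∫ y in s, J (x - y) * (φ y - φ x) ^ 2 ∂μ ∂μ
        ≤ ∫ _ in s, (1 : ℝ) ∂μ := integral_mono_of_nonneg
          (ae_of_all _ fun x => integral_nonneg fun y => mul_nonneg (hJ _) (sq_nonneg _))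
          (integrableOn_const hs) (ae_of_all _ hinner)
    _ = μ.real s := by rw [setIntegral_const, smul_eq_mul, mul_one]

namespace Metric

lemma exists_closedBall_subset_of_lt {X : Type*} [PseudoMetricSpace X] {Ω : Set X}
    {f : X → ℝ} {x₀ : X} {a : ℝ} (hΩ : IsOpen Ω) (hf : ContinuousOn f (closure Ω))
    (hx₀ : x₀ ∈ closure Ω) (ha : f x₀ < a) :
    ∃ x ρ, 0 < ρ ∧ closedBall x ρ ⊆ Ω ∧ ∀ y ∈ closedBall x ρ, f y < a := by
  have hU : IsOpen (Ω ∩ f ⁻¹' Iio a) :=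
    (hf.mono subset_closure).isOpen_inter_preimage hΩ isOpen_Iio
  have : (𝓝[Ω] x₀).NeBot := mem_closure_iff_nhdsWithin_neBot.1 hx₀
  obtain ⟨x, hx⟩ : (Ω ∩ f ⁻¹' Iio a).Nonempty := nonempty_of_mem <|
    inter_mem self_mem_nhdsWithin
      (nhdsWithin_mono x₀ subset_closure (hf x₀ hx₀ (Iio_mem_nhds ha)))
  obtain ⟨ε, hε, hball⟩ := isOpen_iff.1 hU x hx
  have hsub := (closedBall_subset_ball (half_lt_self hε)).trans hball
  exact ⟨x, ε / 2, half_pos hε, fun y hy => (hsub hy).1, fun y hy => (hsub hy).2⟩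

end Metric

lemma tendsto_sInf_nhdsWithin_Ioi_zero {S : ℝ → Set ℝ} {m : ℝ}
    (hlower : ∀ d, 0 < d → ∀ r ∈ S d, m ≤ r)
    (hupper : ∀ c, m < c → ∃ K, ∀ d, 0 < d → ∃ r ∈ S d, r ≤ d * K + c) :
    Tendsto (fun d => sInf (S d)) (𝓝[>] 0) (𝓝 m) := by
  have hbounds :
      ∀ c, m < c → ∃ K, ∀ d, 0 < d → m ≤ sInf (S d) ∧ sInf (S d) ≤ d * K + c := by
    intro c hc
    obtain ⟨K, hK⟩ := hupper c hc
    refine ⟨K, fun d hd => ?_⟩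
    obtain ⟨r, hr, hrc⟩ := hK d hd
    exact ⟨le_csInf ⟨r, hr⟩ (hlower d hd), (csInf_le ⟨m, hlower d hd⟩ hr).trans hrc⟩
  refine tendsto_order.2 ⟨fun a ha => ?_, fun a ha => ?_⟩
  · obtain ⟨K, hK⟩ := hbounds (m + 1) (lt_add_one m)
    exact eventually_nhdsWithin_of_forall fun d hd => ha.trans_le (hK d hd).1
  · obtain ⟨K, hK⟩ := hbounds ((m + a) / 2) (by linarith)
    have hlim : Tendsto (fun d : ℝ => d * K + (m + a) / 2) (𝓝[>] 0) (𝓝 ((m + a) / 2)) := by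
      refine tendsto_nhdsWithin_of_tendsto_nhds ?_
      have hcont : Continuous fun d : ℝ => d * K + (m + a) / 2 := by fun_prop
      simpa using hcont.tendsto 0
    filter_upwards [hlim.eventually (gt_mem_nhds (show (m + a) / 2 < a by linarith)),
      self_mem_nhdsWithin] with d hd hd0
    exact (hK d hd0).2.trans_lt hd

section Rayleigh

variable {n : ℕ} {J : Euc n → ℝ} {Ω : Set (Euc n)} {β γ : Euc n → ℝ} {d : ℝ}

lemma le_of_mem_rayleighSet {m C r : ℝ} (hJ : ∀ x, 0 ≤ J x) (hd : 0 ≤ d)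
    (hΩ : MeasurableSet Ω) (hmeas : AEStronglyMeasurable (fun x => γ x - β x) (volume.restrict Ω))
    (hC : ∀ x ∈ Ω, ‖γ x - β x‖ ≤ C) (hm : ∀ x ∈ Ω, m ≤ γ x - β x)
    (hr : r ∈ rayleighSet J Ω β γ d) : m ≤ r := by
  obtain ⟨φ, hφ, hφ0, rfl⟩ := hr
  have hE : 0 ≤ ∫ x in Ω, ∫ y in Ω, J (x - y) * (φ y - φ x) ^ 2 :=
    integral_nonneg fun x => integral_nonneg fun y => mul_nonneg (hJ _) (sq_nonneg _)
  have hV := mul_integral_sq_le_integral_mul_sq hφ hmeas (ae_restrict_of_forall_mem hΩ hC)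
    (ae_restrict_of_forall_mem hΩ hm)
  rw [le_div_iff₀ (integral_sq_pos hφ hφ0)]
  nlinarith [mul_nonneg hd hE]

lemma exists_mem_rayleighSet_le {B : Set (Euc n)} {c : ℝ} (hJ : ∀ x, 0 ≤ J x)
    (hJ1 : ∫ x, J x = 1) (hd : 0 ≤ d) (hΩ : volume Ω ≠ ⊤) (hB : MeasurableSet B)
    (hBΩ : B ⊆ Ω) (hB0 : volume B ≠ 0) (hf : IntegrableOn (fun x => γ x - β x) B)
    (hc : ∀ x ∈ B, γ x - β x ≤ c) :
    ∃ r ∈ rayleighSet J Ω β γ d, r ≤ d / 2 * volume.real Ω / volume.real B + c := by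
  set φ : Euc n → ℝ := B.indicator fun _ => 1
  have hBtop : volume B ≠ ⊤ := ne_top_of_le_ne_top hΩ (measure_mono hBΩ)
  have hBpos : 0 < volume.real B := ENNReal.toReal_pos hB0 hBtop
  have hrestrict : ∀ g : Euc n → ℝ, ∫ x in Ω, B.indicator g x = ∫ x in B, g x := by
    intro g
    rw [integral_indicator hB, Measure.restrict_restrict hB, inter_eq_self_of_subset_left hBΩ]
  have hφsq : (fun x => φ x ^ 2) = φ :=
    funext fun x => by by_cases hx : x ∈ B <;> simp [φ, hx]
  have hden : ∫ x in Ω, φ x ^ 2 = volume.real B := by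
    rw [hφsq, hrestrict, setIntegral_const, smul_eq_mul, mul_one]
  have hpot : ∫ x in Ω, (γ x - β x) * φ x ^ 2 ≤ c * volume.real B := by
    have hind : (fun x => (γ x - β x) * φ x ^ 2) = B.indicator fun x => γ x - β x :=
      funext fun x => by by_cases hx : x ∈ B <;> simp [φ, hx]
    rw [hind, hrestrict]
    calc ∫ x in B, γ x - β x ≤ ∫ _ in B, c :=
          setIntegral_mono_on hf (integrableOn_const hBtop) hB hc
      _ = c * volume.real B := by rw [setIntegral_const, smul_eq_mul, mul_comm]
  have hE : ∫ x in Ω, ∫ y in Ω, J (x - y) * (φ y - φ x) ^ 2 ≤ volume.real Ω :=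
    setIntegral_setIntegral_kernel_mul_sq_sub_le hJ hJ1 hΩ fun x y => by
      by_cases hx : x ∈ B <;> by_cases hy : y ∈ B <;> simp [φ, hx, hy]
  have hφ : MemLp φ 2 (volume.restrict Ω) := memLp_indicator_const 2 hB 1 <| Or.inr <| by
    rwa [Measure.restrict_apply hB, inter_eq_self_of_subset_left hBΩ]
  have hφ0 : ¬ ∀ᵐ x ∂(volume.restrict Ω), φ x = 0 := fun h =>
    hBpos.ne' (hden ▸ integral_eq_zero_of_ae (h.mono fun x hx => by simp [hx]))
  refine ⟨_, ⟨φ, hφ, hφ0, rfl⟩, ?_⟩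
  rw [hden, div_le_iff₀ hBpos, add_mul, div_mul_cancel₀ _ hBpos.ne']
  exact add_le_add (mul_le_mul_of_nonneg_left hE (by positivity)) hpot

end Rayleigh

theorem lambdaP_tendsto_zero_general {n : ℕ} (J : Euc n → ℝ) (Ω : Set (Euc n))
    (β γ : Euc n → ℝ) (hΩ : DomainHyp Ω) (hJ : KernelHyp J Ω)
    (hβ : RateHyp Ω β) (hγ : RateHyp Ω γ) :
    Tendsto (fun d => lambdaP J Ω β γ d) (𝓝[>] (0 : ℝ))
      (𝓝 (sInf ((fun x => γ x - β x) '' closure Ω))) := by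
  obtain ⟨hΩo, hΩconn, hΩb⟩ := hΩ
  obtain ⟨-, -, -, hJ0, hJ1, -⟩ := hJ
  set f : Euc n → ℝ := fun x => γ x - β x
  have hf : ContinuousOn f (closure Ω) := hγ.1.sub hβ.1
  have hK : IsCompact (closure Ω) := hΩb.isCompact_closure
  obtain ⟨⟨x₀, hx₀, hfx₀⟩, hmin⟩ :=
    (hK.image_of_continuousOn hf).isLeast_sInf (hΩconn.nonempty.closure.image f)
  obtain ⟨C, hC⟩ := hK.exists_bound_of_continuousOn hf
  refine tendsto_sInf_nhdsWithin_Ioi_zero (fun d hd r =>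
    le_of_mem_rayleighSet hJ0 hd.le hΩo.measurableSet
      ((hf.mono subset_closure).aestronglyMeasurable hΩo.measurableSet)
      (fun x hx => hC x (subset_closure hx)) fun x hx => hmin ⟨x, subset_closure hx, rfl⟩)
    fun c hc => ?_
  obtain ⟨x, ρ, hρ, hBΩ, hBc⟩ :=
    Metric.exists_closedBall_subset_of_lt hΩo hf hx₀ (hfx₀.trans_lt hc)
  refine ⟨volume.real Ω / (2 * volume.real (Metric.closedBall x ρ)), fun d hd => ?_⟩
  obtain ⟨r, hr, hrc⟩ := exists_mem_rayleighSet_le hJ0 hJ1 hd.le hΩb.measure_lt_top.ne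
    Metric.isClosed_closedBall.measurableSet hBΩ (Metric.measure_closedBall_pos _ x hρ).ne'
    ((hf.mono (hBΩ.trans subset_closure)).integrableOn_compact (isCompact_closedBall x ρ))
    fun y hy => (hBc y hy).le
  exact ⟨r, hr, hrc.trans_eq (by ring)⟩

/-- λ_p(d) → min_{Ω̄} (γ − β) as d → 0⁺. -/
theorem lambdaP_tendsto_zero {n : ℕ} (J : Euc n → ℝ) (Ω : Set (Euc n))
    (β γ : Euc n → ℝ) (hΩ : DomainHyp Ω) (hJ : KernelHyp J Ω)
    (hβ : RateHyp Ω β) (hγ : RateHyp Ω γ)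
    (hpe : ∀ d : ℝ, 0 < d → IsPrincipalEigen J Ω β γ d (lambdaP J Ω β γ d)) :
    Tendsto (fun d => lambdaP J Ω β γ d) (𝓝[>] (0 : ℝ))
      (𝓝 (sInf ((fun x => γ x - β x) '' closure Ω))) :=
  lambdaP_tendsto_zero_general J Ω β γ hΩ hJ hβ hγ
end
end

section
/- Let d_S, d_I > 0 and N > 0, and let S̃, Ĩ be nonnegative continuous functions on the closure of Ω, not both identically zero. Then (S̃, Ĩ) is a solution of the stationary system d_S ∫_Ω J(x−y)(S̃(y)−S̃(x)) dy = β(x)S̃Ĩ/(S̃+Ĩ) − γ(x)Ĩ and d_I ∫_Ω J(x−y)(Ĩ(y)−Ĩ(x)) dy = −β(x)S̃Ĩ/(S̃+Ĩ) + γ(x)Ĩ in Ω with ∫_Ω (S̃(x)+Ĩ(x)) dx = N, if and only if there is a positive constant k such that d_S S̃(x) + d_I Ĩ(x) = k for all x ∈ Ω, Ĩ satisfies the single equation d_I ∫_Ω J(x−y)(Ĩ(y)−Ĩ(x)) dy + β(x)S̃Ĩ/(S̃+Ĩ) − γ(x)Ĩ = 0 in Ω, and ∫_Ω (S̃(x)+Ĩ(x))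 dx = N. -/
open MeasureTheory Set Filter Topology

noncomputable section

/-- The nonlinear incidence s·i/(s+i), set to 0 when s = 0 or i = 0. -/
def incid (s i : ℝ) : ℝ := if s = 0 ∨ i = 0 then 0 else s * i / (s + i)

/-- (S, I) is a (classical, continuous) solution of the nonlocal SIS system on Ω. -/
def IsSISsol {n : ℕ} (J : Euc n → ℝ) (Ω : Set (Euc n)) (β γ : Euc n → ℝ)
    (dS dI : ℝ) (S I : Euc n → ℝ → ℝ) : Prop :=
  ContinuousOn (fun p : Euc n × ℝ => S p.1 p.2) (closure Ω ×ˢ Ici (0 : ℝ)) ∧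
  ContinuousOn (fun p : Euc n × ℝ => I p.1 p.2) (closure Ω ×ˢ Ici (0 : ℝ)) ∧
  (∀ x ∈ Ω, ∀ t : ℝ, 0 < t →
    HasDerivAt (fun τ => S x τ)
      (dS * (∫ y in Ω, J (x - y) * (S y t - S x t))
        - β x * incid (S x t) (I x t) + γ x * I x t) t) ∧
  (∀ x ∈ Ω, ∀ t : ℝ, 0 < t →
    HasDerivAt (fun τ => I x τ)
      (dI * (∫ y in Ω, J (x - y) * (I y t - I x t))
        + β x * incid (S x t) (I x t) - γ x * I x t) t)

/-- (S, I) is a stationary solution of the nonlocal SIS system with total mass N. -/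
def IsStatSol {n : ℕ} (J : Euc n → ℝ) (Ω : Set (Euc n)) (β γ : Euc n → ℝ)
    (dS dI N : ℝ) (S I : Euc n → ℝ) : Prop :=
  (∀ x ∈ Ω, dS * (∫ y in Ω, J (x - y) * (S y - S x))
      = β x * incid (S x) (I x) - γ x * I x) ∧
  (∀ x ∈ Ω, dI * (∫ y in Ω, J (x - y) * (I y - I x))
      = -(β x * incid (S x) (I x)) + γ x * I x) ∧
  (∫ x in Ω, (S x + I x)) = N

/-! The sum of the two equations says that `W = d_S S + d_I I` satisfies
`∫_Ω J(x - y) (W y - W x) dy = 0` on `Ω`. This nonlocal operator is continuous up to the boundary,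
so the identity persists at a maximum point `x₀ ∈ closure Ω` of `W`; there the integrand is
`≤ 0`, hence vanishes, and `W` attains its maximum wherever `J (x₀ - ·) > 0`, in particular near
`x₀`. The set of interior maximum points is thus nonempty, open and relatively closed, so it is
all of the connected set `Ω`. The constant is positive because the total mass is. Conversely, if
`W` is constant the first equation is minus the second. -/

section NonlocalDiffusion

variable {E : Type*} [NormedAddCommGroup E] [MeasurableSpace E]

def nonlocalDiffusion (μ : Measure E) (J : E → ℝ) (Ω : Set E) (u : E → ℝ) (x : E) : ℝ :=
  ∫ y in Ω, J (x - y) * (u y - u x) ∂μ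

variable {μ : Measure E} {J u v : E → ℝ} {Ω : Set E}

theorem nonlocalDiffusion_eq_zero_of_eqOn_const {c : ℝ} (hu : ∀ y ∈ Ω, u y = c) {x : E}
    (hx : x ∈ Ω) : nonlocalDiffusion μ J Ω u x = 0 :=
  setIntegral_eq_zero_of_forall_eq_zero fun y hy => by rw [hu y hy, hu x hx, sub_self, mul_zero]

theorem eq_of_nonlocalDiffusion_eq_zero_of_isMaxOn [OpensMeasurableSpace E] [μ.IsOpenPosMeasure]
    (hΩ : IsOpen Ω) (hJ : Continuous J) (hJ_nonneg : ∀ z, 0 ≤ J z) (hu : ContinuousOn u Ω) {z : E}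
    (hint : IntegrableOn (fun y => J (z - y) * (u y - u z)) Ω μ) (hmax : IsMaxOn u Ω z)
    (hz : nonlocalDiffusion μ J Ω u z = 0) {y : E} (hy : y ∈ Ω) (hJy : 0 < J (z - y)) :
    u y = u z := by
  have hnonneg : 0 ≤ᵐ[μ.restrict Ω] fun y => -(J (z - y) * (u y - u z)) :=
    ae_restrict_of_forall_mem hΩ.measurableSet fun y hy =>
      neg_nonneg.2 (mul_nonpos_of_nonneg_of_nonpos (hJ_nonneg _) (sub_nonpos.2 (hmax hy)))
  have hae : (fun y => -(J (z - y) * (u y - u z))) =ᵐ[μ.restrict Ω] 0 :=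
    (setIntegral_eq_zero_iff_of_nonneg_ae hnonneg hint.neg).1 <| by
      rw [integral_neg, ← nonlocalDiffusion, hz, neg_zero]
  have hzero := Measure.eqOn_open_of_ae_eq hae hΩ (by fun_prop) continuousOn_const hy
  simpa [hJy.ne', sub_eq_zero] using hzero

variable [ProperSpace E] [BorelSpace E]

theorem integrableOn_of_continuousOn_closure [IsFiniteMeasureOnCompacts μ]
    (hΩ : Bornology.IsBounded Ω) (hu : ContinuousOn u (closure Ω)) : IntegrableOn u Ω μ :=
  (hu.integrableOn_compact hΩ.isCompact_closure).mono_set subset_closure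

theorem integrableOn_nonlocalDiffusion_integrand [IsFiniteMeasureOnCompacts μ]
    (hJ : Continuous J) (hΩ : Bornology.IsBounded Ω) (hu : ContinuousOn u (closure Ω)) (x : E) :
    IntegrableOn (fun y => J (x - y) * (u y - u x)) Ω μ :=
  integrableOn_of_continuousOn_closure hΩ (by fun_prop)

theorem continuous_setIntegral_kernel_mul (hJ : Continuous J) (hΩ : Bornology.IsBounded Ω)
    (hu : IntegrableOn u Ω μ) : Continuous fun x => ∫ y in Ω, J (x - y) * u y ∂μ := by
  refine continuous_iff_continuousAt.2 fun x₀ => ?_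
  have hK : IsCompact ((fun p : E × E => p.1 - p.2) '' Metric.closedBall x₀ 1 ×ˢ closure Ω) :=
    ((isCompact_closedBall x₀ 1).prod hΩ.isCompact_closure).image (by fun_prop)
  obtain ⟨C, hC⟩ := hK.exists_bound_of_continuousOn hJ.continuousOn
  have h_closure : ∀ᵐ y ∂μ.restrict Ω, y ∈ closure Ω :=
    ae_restrict_of_ae_restrict_of_subset subset_closure
      (ae_restrict_mem isClosed_closure.measurableSet)
  refine continuousAt_of_dominated (bound := fun y => C * ‖u y‖) ?_ ?_
    (hu.norm.const_mul C) (.of_forall fun y => by fun_prop)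
  · exact .of_forall fun x =>
      (by fun_prop : Continuous fun y => J (x - y)).aestronglyMeasurable.mul hu.1
  · filter_upwards [Metric.closedBall_mem_nhds x₀ one_pos] with x hx
    filter_upwards [h_closure] with y hy
    rw [norm_mul]
    exact mul_le_mul_of_nonneg_right (hC _ ⟨(x, y), ⟨hx, hy⟩, rfl⟩) (norm_nonneg _)

theorem nonlocalDiffusion_eq_sub [IsFiniteMeasureOnCompacts μ] (hJ : Continuous J)
    (hΩ : Bornology.IsBounded Ω) (hu : ContinuousOn u (closure Ω)) (x : E) :
    nonlocalDiffusion μ J Ω u x =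
      (∫ y in Ω, J (x - y) * u y ∂μ) - (∫ y in Ω, J (x - y) ∂μ) * u x := by
  have hJx : ContinuousOn (fun y => J (x - y)) (closure Ω) := by fun_prop
  have hJu : IntegrableOn (fun y => J (x - y) * u y) Ω μ :=
    integrableOn_of_continuousOn_closure hΩ (hJx.mul hu)
  simp_rw [nonlocalDiffusion, mul_sub]
  rw [integral_sub hJu ((integrableOn_of_continuousOn_closure hΩ hJx).mul_const _),
    integral_mul_const]

theorem continuousOn_nonlocalDiffusion [IsFiniteMeasureOnCompacts μ] (hJ : Continuous J)
    (hΩ : Bornology.IsBounded Ω) (hu : ContinuousOn u (closure Ω)) :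
    ContinuousOn (nonlocalDiffusion μ J Ω u) (closure Ω) := by
  have hJu := continuous_setIntegral_kernel_mul hJ hΩ
    (integrableOn_of_continuousOn_closure (μ := μ) hΩ hu)
  have hJ1 := continuous_setIntegral_kernel_mul hJ hΩ
    (integrableOn_of_continuousOn_closure (μ := μ) (u := 1) hΩ continuousOn_const)
  simp only [Pi.one_apply, mul_one] at hJ1
  rw [funext (nonlocalDiffusion_eq_sub hJ hΩ hu)]
  exact hJu.continuousOn.sub (hJ1.continuousOn.mul hu)

theorem nonlocalDiffusion_linear_combination [IsFiniteMeasureOnCompacts μ] (hJ : Continuous J)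
    (hΩ : Bornology.IsBounded Ω) (hu : ContinuousOn u (closure Ω))
    (hv : ContinuousOn v (closure Ω)) (a b : ℝ) (x : E) :
    nonlocalDiffusion μ J Ω (fun y => a * u y + b * v y) x =
      a * nonlocalDiffusion μ J Ω u x + b * nonlocalDiffusion μ J Ω v x := by
  have hsplit : (fun y => J (x - y) * ((a * u y + b * v y) - (a * u x + b * v x))) =
      fun y => a * (J (x - y) * (u y - u x)) + b * (J (x - y) * (v y - v x)) := by
    funext y; ring
  rw [nonlocalDiffusion, hsplit,
    integral_add ((integrableOn_nonlocalDiffusion_integrand hJ hΩ hu x).const_mul a)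
      ((integrableOn_nonlocalDiffusion_integrand hJ hΩ hv x).const_mul b),
    integral_const_mul, integral_const_mul, nonlocalDiffusion, nonlocalDiffusion]

theorem exists_eqOn_const_of_nonlocalDiffusion_eq_zero [IsFiniteMeasureOnCompacts μ]
    [μ.IsOpenPosMeasure] (hΩo : IsOpen Ω) (hΩc : IsPreconnected Ω) (hΩb : Bornology.IsBounded Ω)
    (hJ : Continuous J) (hJ0 : 0 < J 0) (hJ_nonneg : ∀ z, 0 ≤ J z)
    (hu : ContinuousOn u (closure Ω)) (h : ∀ x ∈ Ω, nonlocalDiffusion μ J Ω u x = 0) :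
    ∃ c, ∀ x ∈ Ω, u x = c := by
  rcases Ω.eq_empty_or_nonempty with rfl | hne
  · exact ⟨0, by simp⟩
  obtain ⟨x₀, hx₀, hmax⟩ := hΩb.isCompact_closure.exists_isMaxOn hne.closure hu
  have hx₀_zero : nonlocalDiffusion μ J Ω u x₀ = 0 :=
    Set.EqOn.of_subset_closure h (continuousOn_nonlocalDiffusion hJ hΩb hu) continuousOn_const
      subset_closure subset_rfl hx₀
  have hJ_near : ∀ x, ∀ᶠ y in 𝓝 x, 0 < J (x - y) := fun x =>
    continuousAt_const.eventually_lt (by fun_prop : Continuous fun y => J (x - y)).continuousAt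
      (by simpa using hJ0)
  have hprop : ∀ z, IsMaxOn u Ω z → nonlocalDiffusion μ J Ω u z = 0 →
      ∀ y ∈ Ω, 0 < J (z - y) → u y = u z := fun z hz hz0 y hy hJy =>
    eq_of_nonlocalDiffusion_eq_zero_of_isMaxOn hΩo hJ hJ_nonneg (hu.mono subset_closure)
      (integrableOn_nonlocalDiffusion_integrand hJ hΩb hu z) hz hz0 hy hJy
  refine ⟨u x₀, fun x hx =>
    (hΩc.subset_of_closure_inter_subset (u := Ω ∩ u ⁻¹' {u x₀}) ?_ ?_ ?_ hx).2⟩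
  · refine isOpen_iff_mem_nhds.2 fun x ⟨hxΩ, hxM⟩ => ?_
    have hxmax : IsMaxOn u Ω x := fun y hy => (hxM : u x = u x₀) ▸ hmax (subset_closure hy)
    filter_upwards [hΩo.mem_nhds hxΩ, hJ_near x] with y hy hJy
    exact ⟨hy, (hprop x hxmax (h x hxΩ) y hy hJy).trans hxM⟩
  · obtain ⟨y, hJy, hy⟩ := mem_closure_iff_nhds.1 hx₀ _ (hJ_near x₀)
    exact ⟨y, hy, hy, hprop x₀ (hmax.on_subset subset_closure) hx₀_zero y hy hJy⟩
  · rintro y ⟨hy, hyΩ⟩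
    have hclosed : closure (Ω ∩ u ⁻¹' {u x₀}) ⊆ closure Ω ∩ u ⁻¹' {u x₀} :=
      closure_minimal (inter_subset_inter_left _ subset_closure)
        (hu.preimage_isClosed_of_isClosed isClosed_closure isClosed_singleton)
    exact ⟨hyΩ, (hclosed hy).2⟩

end NonlocalDiffusion

theorem stationary_equiv_general {n : ℕ} (J : Euc n → ℝ) (Ω : Set (Euc n))
    (β γ : Euc n → ℝ) (hΩ : DomainHyp Ω) (hJ : KernelHyp J Ω)
    (dS dI N : ℝ) (hdS : 0 < dS) (hdI : 0 < dI) (hN : 0 < N)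
    (S I : Euc n → ℝ)
    (hScont : ContinuousOn S (closure Ω)) (hIcont : ContinuousOn I (closure Ω))
    (hSnonneg : ∀ x ∈ closure Ω, 0 ≤ S x) (hInonneg : ∀ x ∈ closure Ω, 0 ≤ I x) :
    IsStatSol J Ω β γ dS dI N S I ↔
      ((∃ k : ℝ, 0 < k ∧ ∀ x ∈ Ω, dS * S x + dI * I x = k) ∧
       (∀ x ∈ Ω, dI * (∫ y in Ω, J (x - y) * (I y - I x))
          + β x * incid (S x) (I x) - γ x * I x = 0) ∧
       (∫ x in Ω, (S x + I x)) = N) := by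
  obtain ⟨hΩo, hΩc, hΩb⟩ := hΩ
  obtain ⟨hJc, hJ0, -, hJ_nonneg, -, -⟩ := hJ
  have hsum := nonlocalDiffusion_linear_combination (μ := volume) hJc hΩb hScont hIcont dS dI
  constructor
  · rintro ⟨hS_eq, hI_eq, hmass⟩
    obtain ⟨k, hk⟩ := exists_eqOn_const_of_nonlocalDiffusion_eq_zero
      (u := fun y => dS * S y + dI * I y) hΩo hΩc.isPreconnected hΩb hJc hJ0 hJ_nonneg
      ((continuousOn_const.mul hScont).add (continuousOn_const.mul hIcont)) fun x hx => by
        rw [hsum, nonlocalDiffusion, nonlocalDiffusion]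
        linarith [hS_eq x hx, hI_eq x hx]
    refine ⟨⟨k, ?_, hk⟩, fun x hx => by linarith [hI_eq x hx], hmass⟩
    obtain ⟨x, hx, hSI⟩ : ∃ x ∈ Ω, S x + I x ≠ 0 := by
      by_contra! h
      exact hN.ne' (hmass ▸ setIntegral_eq_zero_of_forall_eq_zero h)
    have hS := hSnonneg x (subset_closure hx)
    have hI := hInonneg x (subset_closure hx)
    have hSI_pos : 0 < S x + I x := (add_nonneg hS hI).lt_of_ne' hSI
    rw [← hk x hx]
    -- `d_S S + d_I I ≥ min d_S d_I * (S + I)`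
    nlinarith [mul_pos (lt_min hdS hdI) hSI_pos, min_le_left dS dI, min_le_right dS dI]
  · rintro ⟨⟨k, -, hk⟩, hI_eq, hmass⟩
    refine ⟨fun x hx => ?_, fun x hx => by linarith [hI_eq x hx], hmass⟩
    have hW := hsum x
    rw [nonlocalDiffusion_eq_zero_of_eqOn_const hk hx] at hW
    unfold nonlocalDiffusion at hW
    linarith [hI_eq x hx]

/-- equivalence between the stationary SIS system and the reduced system
with d_S S̃ + d_I Ĩ constant. -/
theorem stationary_equiv {n : ℕ} (J : Euc n → ℝ) (Ω : Set (Euc n))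
    (β γ : Euc n → ℝ) (hΩ : DomainHyp Ω) (hJ : KernelHyp J Ω)
    (hβ : RateHyp Ω β) (hγ : RateHyp Ω γ)
    (dS dI N : ℝ) (hdS : 0 < dS) (hdI : 0 < dI) (hN : 0 < N)
    (S I : Euc n → ℝ)
    (hScont : ContinuousOn S (closure Ω)) (hIcont : ContinuousOn I (closure Ω))
    (hSnonneg : ∀ x ∈ closure Ω, 0 ≤ S x) (hInonneg : ∀ x ∈ closure Ω, 0 ≤ I x)
    (hnz : ¬ ∀ x ∈ closure Ω, S x = 0 ∧ I x = 0) :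
    IsStatSol J Ω β γ dS dI N S I ↔
      ((∃ k : ℝ, 0 < k ∧ ∀ x ∈ Ω, dS * S x + dI * I x = k) ∧
       (∀ x ∈ Ω, dI * (∫ y in Ω, J (x - y) * (I y - I x))
          + β x * incid (S x) (I x) - γ x * I x = 0) ∧
       (∫ x in Ω, (S x + I x)) = N) :=
  stationary_equiv_general J Ω β γ hΩ hJ dS dI N hdS hdI hN S I hScont hIcont hSnonneg hInonneg
end
end
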